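/- Let x satisfy Q(1−γ) < x ≤ Q(1−α). Then ∫_{-∞}^{x} J(F(y)) dy = (1/(γ−α))·( (γ−α)·Q(γ) − ∫_{α}^{γ} Q(u) du ) + Q(1−γ) − Q(γ) + (1/(γ−α))·( (1−α)·x + (α−γ)·Q(1−γ) − F(x)·x + ∫_{1−γ}^{F(x)} Q(u) du ). -/

import Mathlib

/-!
To the left of `Q α` the weight `J ∘ F` vanishes, and on each of the three pieces of `[Q α, x]`
cut out by `Q γ` and `Q (1 - γ)` it is an affine function of `F`. Integrals of `F` are traded
for integrals of `Q` through the area identity `∫_c^d F + ∫_{F c}^{F d} Q = d F(d) - c F(c)`: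
the region between `F c` and the graph of `F` over `(c, d)` is the mirror image, under
`(y, u) ↦ (u, y)`, of the region between the graph of `Q` and `d` over `(F c, F d)`.
-/

open MeasureTheory intervalIntegral Set Function

section InverseIntegral

variable {F Q : ℝ → ℝ} {c d : ℝ}

theorem mem_Icc_and_apply_of_leftInverse (hF : ContinuousOn F (Icc c d)) (hQF : LeftInverse Q F)
    (hcd : c ≤ d) {u : ℝ} (hu : u ∈ Icc (F c) (F d)) : Q u ∈ Icc c d ∧ F (Q u) = u := by
  obtain ⟨t, ht, rfl⟩ := intermediate_value_Icc hcd hF hu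
  rw [hQF t]
  exact ⟨ht, rfl⟩

theorem regionBetween_eq_swap_preimage_regionBetween_of_leftInverse (hF : Continuous F)
    (hFmono : StrictMono F) (hQF : LeftInverse Q F) (hcd : c ≤ d) :
    regionBetween (fun _ => F c) F (Ioo c d) =
      Prod.swap ⁻¹' regionBetween Q (fun _ => d) (Ioo (F c) (F d)) := by
  have hQ {u} (hu : u ∈ Ioo (F c) (F d)) :=
    mem_Icc_and_apply_of_leftInverse hF.continuousOn hQF hcd (Ioo_subset_Icc_self hu)
  ext ⟨y, u⟩
  simp only [regionBetween, mem_preimage, Prod.swap_prod_mk, mem_ofPred_eq, mem_Ioo]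
  constructor
  · rintro ⟨⟨hcy, hyd⟩, hcu, huy⟩
    have hu : u ∈ Ioo (F c) (F d) := ⟨hcu, huy.trans (hFmono hyd)⟩
    refine ⟨hu, hFmono.lt_iff_lt.1 ?_, hyd⟩
    rwa [(hQ hu).2]
  · rintro ⟨hu, hQuy, hyd⟩
    refine ⟨⟨(hQ hu).1.1.trans_lt hQuy, hyd⟩, hu.1, ?_⟩
    simpa only [(hQ hu).2] using hFmono hQuy

theorem integral_add_integral_of_leftInverse (hF : Continuous F) (hFmono : StrictMono F)
    (hQF : LeftInverse Q F) (hcd : c ≤ d) :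
    (∫ y in c..d, F y) + ∫ u in F c..F d, Q u = d * F d - c * F c := by
  have hFcd : F c ≤ F d := hFmono.monotone hcd
  have hQ {u} (hu : u ∈ Icc (F c) (F d)) :=
    mem_Icc_and_apply_of_leftInverse hF.continuousOn hQF hcd hu
  have hQmono : MonotoneOn Q (Icc (F c) (F d)) := fun u hu v hv huv =>
    hFmono.le_iff_le.1 (by rwa [(hQ hu).2, (hQ hv).2])
  have hQint : IntegrableOn Q (Icc (F c) (F d)) := hQmono.integrableOn_isCompact isCompact_Icc
  have hvolF : volume (regionBetween (fun _ => F c) F (Ioo c d)) =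
      ENNReal.ofReal (∫ y in Ioo c d, (F y - F c)) :=
    volume_regionBetween_eq_integral (integrableOn_const measure_Ioo_lt_top.ne)
      (hF.integrableOn_Icc.mono_set Ioo_subset_Icc_self) measurableSet_Ioo
      fun y hy => hFmono.monotone hy.1.le
  have hvolQ : volume (regionBetween Q (fun _ => d) (Ioo (F c) (F d))) =
      ENNReal.ofReal (∫ u in Ioo (F c) (F d), (d - Q u)) :=
    volume_regionBetween_eq_integral (hQint.mono_set Ioo_subset_Icc_self)
      (integrableOn_const measure_Ioo_lt_top.ne)
      measurableSet_Ioo fun u hu => (hQ (Ioo_subset_Icc_self hu)).1.2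
  have hswap : volume (regionBetween (fun _ => F c) F (Ioo c d)) =
      volume (regionBetween Q (fun _ => d) (Ioo (F c) (F d))) := by
    rw [regionBetween_eq_swap_preimage_regionBetween_of_leftInverse hF hFmono hQF hcd,
      Measure.volume_eq_prod]
    exact Measure.measurePreserving_swap.measure_preimage_emb
      MeasurableEquiv.prodComm.measurableEmbedding _
  have hF_nonneg : 0 ≤ ∫ y in Ioo c d, (F y - F c) :=
    setIntegral_nonneg measurableSet_Ioo fun y hy => sub_nonneg.2 (hFmono.monotone hy.1.le)
  have hQ_nonneg : 0 ≤ ∫ u in Ioo (F c) (F d), (d - Q u) :=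
    setIntegral_nonneg measurableSet_Ioo fun u hu => sub_nonneg.2 (hQ (Ioo_subset_Icc_self hu)).1.2
  rw [hvolF, hvolQ, ENNReal.ofReal_eq_ofReal_iff hF_nonneg hQ_nonneg,
    ← integral_Ioc_eq_integral_Ioo, ← integral_Ioc_eq_integral_Ioo, ← integral_of_le hcd,
    ← integral_of_le hFcd, integral_sub (hF.intervalIntegrable _ _) intervalIntegrable_const,
    integral_sub intervalIntegrable_const
      ((intervalIntegrable_iff_integrableOn_Icc_of_le hFcd).2 hQint),
    intervalIntegral.integral_const, intervalIntegral.integral_const, smul_eq_mul,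
    smul_eq_mul] at hswap
  linarith

theorem intervalIntegrable_and_integral_comp_affine {G : ℝ → ℝ} (hF : Continuous F)
    (hFmono : StrictMono F) (hQF : LeftInverse Q F) (hcd : c ≤ d) {k m : ℝ}
    (hG : ∀ u ∈ Icc (F c) (F d), G u = k * u + m) :
    IntervalIntegrable (fun y => G (F y)) volume c d ∧
      ∫ y in c..d, G (F y) = k * (d * F d - c * F c - ∫ u in F c..F d, Q u) + m * (d - c) := by
  have hGF : EqOn (fun y => G (F y)) (fun y => k * F y + m) (uIcc c d) := fun y hy =>
    hG _ (hFmono.monotone.mapsTo_Icc (uIcc_of_le hcd ▸ hy))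
  have hint : IntervalIntegrable (fun y => k * F y + m) volume c d :=
    ((continuous_const.mul hF).add continuous_const).intervalIntegrable _ _
  refine ⟨hint.congr (hGF.symm.mono uIoc_subset_uIcc), ?_⟩
  rw [integral_congr hGF,
    integral_add ((hF.intervalIntegrable _ _).const_mul k) intervalIntegrable_const,
    intervalIntegral.integral_const_mul, intervalIntegral.integral_const, smul_eq_mul,
    ← integral_add_integral_of_leftInverse hF hFmono hQF hcd]
  ring

end InverseIntegral

theorem setIntegral_Iic_eq_intervalIntegral_of_eq_zero {f : ℝ → ℝ} {a b : ℝ} (hab : a ≤ b)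
    (hf : ∀ y ≤ a, f y = 0) : ∫ y in Iic b, f y = ∫ y in a..b, f y := by
  rw [integral_of_le hab]
  exact setIntegral_eq_of_subset_of_forall_sdiff_eq_zero measurableSet_Iic Ioc_subset_Iic_self
    fun y hy => hf y (not_lt.1 fun hay => hy.2 ⟨hay, hy.1⟩)

noncomputable def trimWeight (α γ u : ℝ) : ℝ :=
  if α ≤ u ∧ u < γ then (u - α) / (γ - α)
  else if γ ≤ u ∧ u ≤ 1 - γ then 1
  else if 1 - γ < u ∧ u ≤ 1 - α then (1 - u - α) / (γ - α)
  else 0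

section TrimWeight

variable {α γ u : ℝ}

theorem trimWeight_eq_zero_of_le (hαγ : α < γ) (hγ : γ ≤ 1 / 2) (hu : u ≤ α) :
    trimWeight α γ u = 0 := by
  rcases hu.eq_or_lt with rfl | hu
  · rw [trimWeight, if_pos ⟨le_rfl, hαγ⟩, sub_self, zero_div]
  · rw [trimWeight, if_neg (by linarith [·.1]), if_neg (by linarith [·.1]),
      if_neg (by linarith [·.1])]

theorem trimWeight_of_mem_Icc_flat (hu : u ∈ Icc γ (1 - γ)) : trimWeight α γ u = 1 := by
  rw [trimWeight, if_neg (by linarith [hu.1, ·.2]), if_pos ⟨hu.1, hu.2⟩]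

theorem trimWeight_of_mem_Icc_rising (hαγ : α < γ) (hγ : γ ≤ 1 / 2) (hu : u ∈ Icc α γ) :
    trimWeight α γ u = (u - α) / (γ - α) := by
  rcases hu.2.eq_or_lt with rfl | hlt
  · rw [trimWeight_of_mem_Icc_flat ⟨le_rfl, by linarith⟩, div_self (sub_ne_zero.2 hαγ.ne')]
  · rw [trimWeight, if_pos ⟨hu.1, hlt⟩]

theorem trimWeight_of_mem_Icc_falling (hαγ : α < γ) (hγ : γ ≤ 1 / 2)
    (hu : u ∈ Icc (1 - γ) (1 - α)) : trimWeight α γ u = (1 - u - α) / (γ - α) := by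
  rcases hu.1.eq_or_lt with rfl | hlt
  · rw [trimWeight_of_mem_Icc_flat ⟨by linarith, le_rfl⟩, sub_sub_cancel,
      div_self (sub_ne_zero.2 hαγ.ne')]
  · rw [trimWeight, if_neg (by linarith [·.2]), if_neg (by linarith [·.2]),
      if_pos ⟨hlt, hu.2⟩]

end TrimWeight

theorem smoothly_trimmed_E3
    (α γ : ℝ) (hα : 0 < α) (hαγ : α < γ) (hγ : γ ≤ 1/2)
    (J F Q : ℝ → ℝ)
    (hJ : ∀ u : ℝ, J u =
      if α ≤ u ∧ u < γ then (u - α) / (γ - α)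
      else if γ ≤ u ∧ u ≤ 1 - γ then 1
      else if 1 - γ < u ∧ u ≤ 1 - α then (1 - u - α) / (γ - α)
      else 0)
    (hFcont : Continuous F) (hFmono : StrictMono F)
    (hFQ : ∀ p ∈ Set.Ioo (0:ℝ) 1, F (Q p) = p)
    (hQF : ∀ x : ℝ, Q (F x) = x)
    (x : ℝ) (hx1 : Q (1 - γ) < x) (hx2 : x ≤ Q (1 - α)) :
    ∫ y in Set.Iic x, J (F y) =
      (1 / (γ - α)) * ((γ - α) * Q γ - (∫ u in α..γ, Q u))
        + Q (1 - γ) - Q γ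
        + (1 / (γ - α)) * ((1 - α) * x + (α - γ) * Q (1 - γ) - F x * x
            + (∫ u in (1 - γ)..(F x), Q u)) := by
  obtain rfl : J = trimWeight α γ := funext hJ
  have hFQα : F (Q α) = α := hFQ α ⟨hα, by linarith⟩
  have hFQγ : F (Q γ) = γ := hFQ γ ⟨by linarith, by linarith⟩
  have hFQγ' : F (Q (1 - γ)) = 1 - γ := hFQ _ ⟨by linarith, by linarith⟩
  have hFQα' : F (Q (1 - α)) = 1 - α := hFQ _ ⟨by linarith, by linarith⟩
  have hQαγ : Q α ≤ Q γ := hFmono.le_iff_le.1 (by linarith)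
  have hQγγ : Q γ ≤ Q (1 - γ) := hFmono.le_iff_le.1 (by linarith)
  have hFx : F x ≤ 1 - α := hFQα' ▸ hFmono.monotone hx2
  obtain ⟨hint₁, hrise⟩ := intervalIntegrable_and_integral_comp_affine hFcont hFmono hQF hQαγ
    (G := trimWeight α γ) (k := 1 / (γ - α)) (m := -α / (γ - α)) fun u hu => by
      rw [hFQα, hFQγ] at hu; rw [trimWeight_of_mem_Icc_rising hαγ hγ hu]; ring
  obtain ⟨hint₂, hflat⟩ := intervalIntegrable_and_integral_comp_affine hFcont hFmono hQF hQγγ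
    (G := trimWeight α γ) (k := 0) (m := 1) fun u hu => by
      rw [hFQγ, hFQγ'] at hu; rw [trimWeight_of_mem_Icc_flat hu]; ring
  obtain ⟨hint₃, hfall⟩ := intervalIntegrable_and_integral_comp_affine hFcont hFmono hQF hx1.le
    (G := trimWeight α γ) (k := -1 / (γ - α)) (m := (1 - α) / (γ - α)) fun u hu => by
      rw [hFQγ'] at hu; rw [trimWeight_of_mem_Icc_falling hαγ hγ ⟨hu.1, hu.2.trans hFx⟩]; ring
  rw [setIntegral_Iic_eq_intervalIntegral_of_eq_zero (hQαγ.trans (hQγγ.trans hx1.le))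
      fun y hy => trimWeight_eq_zero_of_le hαγ hγ (hFQα ▸ hFmono.monotone hy),
    ← integral_add_adjacent_intervals hint₁ (hint₂.trans hint₃),
    ← integral_add_adjacent_intervals hint₂ hint₃, hrise, hflat, hfall, hFQα, hFQγ, hFQγ']
  field_simp [sub_ne_zero.2 hαγ.ne']
  ring
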